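/- arXiv:2605.00031 — 2 statements merged into one kernel-verified Lean document; each statement's English description precedes it below -/
import Mathlib

section
/- Let n, s, δ be positive integers with s ≡ 1 (mod 3), δ ≡ 2 (mod 3), δ + 1 ≤ s, 5s ≤ 3n − 1, and 3n ≥ 20δ + 53. Then the number of edges of K_s ∨ (K_{n−⌊5s/3⌋−1} ∪ (⌊2s/3⌋+1)·K_1) is at most the number of edges of K_δ ∨ (K_{n−⌊5δ/3⌋−1} ∪ (⌊2δ/3⌋+1)·K_1). -/
open SimpleGraph

/-- The number of isolated vertices of the induced subgraph `G - S`: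
vertices outside `S` with no neighbor outside `S`. -/
noncomputable def isolatedCount {V : Type*} (G : SimpleGraph V) (S : Finset V) : ℕ :=
  {v : V | v ∉ S ∧ ∀ w ∉ S, ¬ G.Adj v w}.ncard

/-- `G` has a `{P₃, P₄, P₅}`-factor: a spanning subgraph each of whose connected
components is isomorphic to a path on 3, 4 or 5 vertices. -/
def HasP345Factor {V : Type*} (G : SimpleGraph V) : Prop :=
  ∃ H : SimpleGraph V, H ≤ G ∧
    ∀ c : H.ConnectedComponent, ∃ k, (k = 3 ∨ k = 4 ∨ k = 5) ∧
      Nonempty ((SimpleGraph.induce c.supp H) ≃g SimpleGraph.pathGraph k)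

/-- The graph `K_s ∨ (K_{n-⌊5s/3⌋-1} ∪ (⌊2s/3⌋+1)·K_1)` on `n` vertices:
vertices `< s` form the clique `K_s` joined with everything, vertices in
`[s, n - ⌊2s/3⌋ - 1)` form the clique `K_{n-⌊5s/3⌋-1}`, and the remaining
`⌊2s/3⌋ + 1` vertices are isolated in the second part of the join. -/
def extremalGraph (n s : ℕ) : SimpleGraph (Fin n) where
  Adj v w := v ≠ w ∧ ((v : ℕ) < s ∨ (w : ℕ) < s ∨
    ((v : ℕ) < n - 2 * s / 3 - 1 ∧ (w : ℕ) < n - 2 * s / 3 - 1))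
  symm := ⟨fun v w h => ⟨h.1.symm, by tauto⟩⟩
  loopless := ⟨fun v h => h.1 rfl⟩

lemma filt_card (n a : ℕ) (ha : a ≤ n) :
    (Finset.univ.filter fun w : Fin n => (w : ℕ) < a).card = a := by
  have h : ∀ m ∈ Finset.range a, m < n := fun m hm => lt_of_lt_of_le (Finset.mem_range.mp hm) ha
  have : (Finset.univ.filter fun w : Fin n => (w : ℕ) < a) = (Finset.range a).attachFin h := by
    ext w
    simp [Finset.mem_attachFin]
  rw [this, Finset.card_attachFin, Finset.card_range]

lemma twice_edges (n s : ℕ) (hsa : s ≤ n - 2 * s / 3 - 1) (han : n - 2 * s / 3 - 1 < n) :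
    2 * (extremalGraph n s).edgeSet.ncard =
      s * (n - 1) + ((n - 2 * s / 3 - 1) - s) * ((n - 2 * s / 3 - 1) - 1)
        + (n - (n - 2 * s / 3 - 1)) * s := by
  classical
  set a := n - 2 * s / 3 - 1 with ha
  set G := extremalGraph n s with hG
  rw [Set.ncard_eq_toFinset_card']
  have hE : (G.edgeSet).toFinset = G.edgeFinset := rfl
  rw [hE, ← sum_degrees_eq_twice_card_edges]
  have hdeg : ∀ v : Fin n, G.degree v =
      if (v : ℕ) < s then n - 1 else if (v : ℕ) < a then a - 1 else s := by
    intro v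
    rw [degree, neighborFinset_eq_filter]
    by_cases hv : (v : ℕ) < s
    · rw [if_pos hv]
      have : (Finset.univ.filter fun w => G.Adj v w) = Finset.univ.erase v := by
        ext w
        simp only [Finset.mem_filter, Finset.mem_univ, true_and, Finset.mem_erase]
        constructor
        · rintro ⟨h1, -⟩ ; exact ⟨fun h => h1 h.symm, trivial⟩
        · rintro ⟨h1, -⟩ ; exact ⟨fun h => h1 h.symm, Or.inl hv⟩
      rw [this, Finset.card_erase_of_mem (Finset.mem_univ v), Finset.card_univ, Fintype.card_fin]
    · by_cases hv2 : (v : ℕ) < a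
      · rw [if_neg hv, if_pos hv2]
        have : (Finset.univ.filter fun w => G.Adj v w)
            = (Finset.univ.filter fun w : Fin n => (w : ℕ) < a).erase v := by
          ext w
          simp only [Finset.mem_filter, Finset.mem_univ, true_and, Finset.mem_erase]
          constructor
          · rintro ⟨h1, h2⟩
            refine ⟨fun h => h1 h.symm, ?_⟩
            rcases h2 with h | h | h
            · omega
            · omega
            · exact h.2
          · rintro ⟨h1, h2⟩
            exact ⟨fun h => h1 h.symm, Or.inr (Or.inr ⟨hv2, h2⟩)⟩
        rw [this, Finset.card_erase_of_mem, filt_card n a (le_of_lt han)]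
        simp only [Finset.mem_filter, Finset.mem_univ, true_and]
        exact hv2
      · rw [if_neg hv, if_neg hv2]
        have : (Finset.univ.filter fun w => G.Adj v w)
            = Finset.univ.filter fun w : Fin n => (w : ℕ) < s := by
          ext w
          simp only [Finset.mem_filter, Finset.mem_univ, true_and]
          constructor
          · rintro ⟨h1, h2⟩
            rcases h2 with h | h | h
            · omega
            · exact h
            · omega
          · intro h
            have : (w : ℕ) ≠ (v : ℕ) := by omega
            exact ⟨fun he => this (by rw [he]), Or.inr (Or.inl h)⟩
        rw [this, filt_card n s (by omega)]
  calc ∑ v : Fin n, G.degree v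
      = ∑ v : Fin n, (if (v : ℕ) < s then n - 1 else if (v : ℕ) < a then a - 1 else s) :=
        Finset.sum_congr rfl (fun v _ => hdeg v)
    _ = ∑ i ∈ Finset.range n, (if i < s then n - 1 else if i < a then a - 1 else s) :=
        Fin.sum_univ_eq_sum_range (fun i => if i < s then n - 1 else if i < a then a - 1 else s) n
    _ = s * (n - 1) + (a - s) * (a - 1) + (n - a) * s := by
        rw [Finset.range_eq_Ico, ← Finset.sum_Ico_consecutive _ (Nat.zero_le a) (le_of_lt han),
          ← Finset.sum_Ico_consecutive _ (Nat.zero_le s) hsa]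
        have e1 : ∑ i ∈ Finset.Ico 0 s, (if i < s then n - 1 else if i < a then a - 1 else s)
            = s * (n - 1) := by
          rw [Finset.sum_congr rfl (g := fun _ => n - 1)
            (fun i hi => by rw [if_pos]; exact (Finset.mem_Ico.mp hi).2)]
          simp [Nat.Ico_zero_eq_range]
        have e2 : ∑ i ∈ Finset.Ico s a, (if i < s then n - 1 else if i < a then a - 1 else s)
            = (a - s) * (a - 1) := by
          rw [Finset.sum_congr rfl (g := fun _ => a - 1)
            (fun i hi => by
              have h := Finset.mem_Ico.mp hi
              rw [if_neg (by omega), if_pos (by omega)])]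
          simp [Nat.card_Ico, mul_comm]
        have e3 : ∑ i ∈ Finset.Ico a n, (if i < s then n - 1 else if i < a then a - 1 else s)
            = (n - a) * s := by
          rw [Finset.sum_congr rfl (g := fun _ => s)
            (fun i hi => by
              have h := Finset.mem_Ico.mp hi
              rw [if_neg (by omega), if_neg (by omega)])]
          simp [Nat.card_Ico, mul_comm]
        rw [e1, e2, e3]

/-- The spectral radius of a graph: the largest eigenvalue of its adjacency
matrix over the reals. -/
noncomputable def specRad {V : Type*} [Finite V] (G : SimpleGraph V) : ℝ :=
  letI := Fintype.ofFinite V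
  letI := Classical.decEq V
  letI := Classical.decRel G.Adj
  sSup (spectrum ℝ (G.adjMatrix ℝ))

theorem stmt9 (n s δ : ℕ) (hn1 : 1 ≤ n) (hs1 : 1 ≤ s) (hδ1 : 1 ≤ δ)
    (hs : s % 3 = 1) (hδ : δ % 3 = 2) (hsδ : δ + 1 ≤ s)
    (hsn : 5 * s + 1 ≤ 3 * n) (hn : 20 * δ + 53 ≤ 3 * n) :
    (extremalGraph n s).edgeSet.ncard ≤ (extremalGraph n δ).edgeSet.ncard := by
  obtain ⟨k, hk⟩ : ∃ k, s = 3 * k + 1 := ⟨s / 3, by omega⟩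
  obtain ⟨m, hm⟩ : ∃ m, δ = 3 * m + 2 := ⟨δ / 3, by omega⟩
  subst hk hm
  have es : 2 * (3 * k + 1) / 3 = 2 * k := by omega
  have ed : 2 * (3 * m + 2) / 3 = 2 * m + 1 := by omega
  have hsa : 3 * k + 1 ≤ n - 2 * (3 * k + 1) / 3 - 1 := by omega
  have han : n - 2 * (3 * k + 1) / 3 - 1 < n := by omega
  have hda : 3 * m + 2 ≤ n - 2 * (3 * m + 2) / 3 - 1 := by omega
  have hdn : n - 2 * (3 * m + 2) / 3 - 1 < n := by omega
  have h1 := twice_edges n (3 * k + 1) hsa han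
  have h2 := twice_edges n (3 * m + 2) hda hdn
  rw [es] at h1 hsa han
  rw [ed] at h2 hda hdn
  suffices h : 2 * (extremalGraph n (3 * k + 1)).edgeSet.ncard
      ≤ 2 * (extremalGraph n (3 * m + 2)).edgeSet.ncard by omega
  rw [h1, h2]
  have b1 : 2 * k ≤ n := by omega
  have b2 : 1 ≤ n - 2 * k := by omega
  have b3 : 1 ≤ n - 2 * k - 1 := by omega
  have b4 : n - 2 * k - 1 ≤ n := by omega
  have c1 : 2 * m + 1 ≤ n := by omega
  have c2 : 1 ≤ n - (2 * m + 1) := by omega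
  have c3 : 1 ≤ n - (2 * m + 1) - 1 := by omega
  have c4 : n - (2 * m + 1) - 1 ≤ n := by omega
  zify [hn1, hsa, hda, b1, b2, b3, b4, c1, c2, c3, c4]
  have hkZ : (m : ℤ) + 1 ≤ k := by
    have : 3 * m + 3 ≤ 3 * k + 1 := hsδ
    push_cast
    omega
  have hnZ1 : 5 * (k : ℤ) + 2 ≤ n := by push_cast; omega
  have hnZ2 : 20 * (m : ℤ) + 31 ≤ n := by push_cast; omega
  have hmZ : (0 : ℤ) ≤ m := by positivity
  clear h1 h2 es ed hsa han hda hdn b1 b2 b3 b4 c1 c2 c3 c4 hn1 hs1 hδ1 hs hδ hsδ hsn hn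
  rcases le_or_gt (k : ℤ) (4 * m + 5) with h | h
  · nlinarith [mul_nonneg (by linarith : (0:ℤ) ≤ (k:ℤ) - m - 1) (by linarith : (0:ℤ) ≤ 4*(m:ℤ)+5-k),
      mul_nonneg (by linarith : (0:ℤ) ≤ (k:ℤ)-m-1) (by linarith : (0:ℤ) ≤ (n:ℤ) - 20*m-31)]
  · nlinarith [mul_nonneg (by linarith : (0:ℤ) ≤ (k:ℤ) - 4*m-6) (by linarith : (0:ℤ) ≤ (n:ℤ) - 5*k-2),
      mul_nonneg (by linarith : (0:ℤ) ≤ (k:ℤ)-m-1) (by linarith : (0:ℤ) ≤ (n:ℤ) - 5*k-2)]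
end

section
/- Let n, s, δ be positive integers with δ not divisible by 3, s ≡ 2 (mod 3), δ + 1 ≤ s, 5s ≤ 3n − 2, and n ≥ max( (6δ² + 22δ + 31)/6, (20δ + 56)/3 ). Then the spectral radius of K_s ∨ (K_{n−⌊5s/3⌋−1} ∪ (⌊2s/3⌋+1)·K_1) is strictly less than n − ⌊2δ/3⌋ − 2. -/
open SimpleGraph

section Aux

open Finset

lemma eig_sq_le {N : ℕ} (A : Matrix (Fin N) (Fin N) ℝ) (hA : ∀ i j, 0 ≤ A i j)
    (M : ℝ) (hM : ∀ i, ∑ j, (A * A) i j ≤ M) (μ : ℝ) (hμ : μ ∈ spectrum ℝ A) :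
    μ ^ 2 ≤ M := by
  rw [spectrum.mem_iff, Matrix.isUnit_iff_isUnit_det, isUnit_iff_ne_zero, not_not] at hμ
  obtain ⟨v, hv0, hv⟩ := Matrix.exists_mulVec_eq_zero_iff.mpr hμ
  rw [Matrix.sub_mulVec, sub_eq_zero, Algebra.algebraMap_eq_smul_one,
    Matrix.smul_mulVec, Matrix.one_mulVec] at hv
  have hv2 : (A * A).mulVec v = (μ ^ 2) • v := by
    rw [← Matrix.mulVec_mulVec, ← hv, Matrix.mulVec_smul, ← hv, smul_smul, sq]
  obtain ⟨j0, hj0⟩ := Function.ne_iff.mp hv0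
  obtain ⟨i, -, hi⟩ := Finset.exists_max_image Finset.univ (fun j => |v j|) ⟨j0, mem_univ _⟩
  have hvi : 0 < |v i| := lt_of_lt_of_le (abs_pos.mpr hj0) (hi j0 (mem_univ _))
  have key : μ ^ 2 * v i = ∑ j, (A * A) i j * v j := by
    have := congrFun hv2 i
    simpa [Matrix.mulVec, dotProduct, Eq.comm] using this
  have hAA : ∀ i j, 0 ≤ (A * A) i j := fun i j => by
    rw [Matrix.mul_apply]; exact Finset.sum_nonneg fun k _ => mul_nonneg (hA i k) (hA k j)
  have step : |μ ^ 2| * |v i| ≤ M * |v i| := by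
    rw [← abs_mul, key]
    calc |∑ j, (A * A) i j * v j| ≤ ∑ j, |(A * A) i j * v j| := Finset.abs_sum_le_sum_abs _ _
      _ ≤ ∑ j, (A * A) i j * |v i| := by
          refine Finset.sum_le_sum fun j _ => ?_
          rw [abs_mul, abs_of_nonneg (hAA i j)]
          exact mul_le_mul_of_nonneg_left (hi j (mem_univ _)) (hAA i j)
      _ = (∑ j, (A * A) i j) * |v i| := by rw [Finset.sum_mul]
      _ ≤ M * |v i| := mul_le_mul_of_nonneg_right (hM i) (abs_nonneg _)
  calc μ ^ 2 ≤ |μ ^ 2| := le_abs_self _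
    _ ≤ M := le_of_mul_le_mul_right step hvi

lemma rowsum_AA {N : ℕ} (G : SimpleGraph (Fin N)) [DecidableRel G.Adj]
    (A : Matrix (Fin N) (Fin N) ℝ)
    (hA : ∀ i j, A i j = if G.Adj i j then 1 else 0) (i : Fin N) :
    ∑ j, (A * A) i j = ((∑ k ∈ G.neighborFinset i, G.degree k : ℕ) : ℝ) := by
  have hrow : ∀ k, ∑ j, A k j = (G.degree k : ℝ) := by
    intro k
    simp only [hA]
    rw [Finset.sum_boole]
    congr 1
    rw [SimpleGraph.degree, neighborFinset_eq_filter]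
  calc ∑ j, (A * A) i j = ∑ k, A i k * (∑ j, A k j) := by
        simp only [Matrix.mul_apply]
        rw [Finset.sum_comm]
        simp [Finset.mul_sum, Finset.sum_mul]
      _ = ∑ k, A i k * (G.degree k : ℝ) := by simp [hrow]
      _ = ((∑ k ∈ G.neighborFinset i, G.degree k : ℕ) : ℝ) := by
        push_cast
        rw [neighborFinset_eq_filter, Finset.sum_filter]
        congr 1; ext k
        rw [hA]
        split <;> simp

lemma hong {N : ℕ} (G : SimpleGraph (Fin N)) [DecidableRel G.Adj]
    (hmin : ∀ v, 0 < G.degree v) (i : Fin N) :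
    ∑ k ∈ G.neighborFinset i, G.degree k + N ≤ (∑ v, G.degree v) + 1 := by
  have h1 : i ∉ G.neighborFinset i := by simp
  set S := G.neighborFinset i with hS
  have hsplit : ∑ v ∈ univ \ insert i S, G.degree v + ∑ v ∈ insert i S, G.degree v
      = ∑ v, G.degree v := Finset.sum_sdiff (subset_univ _)
  have hins : ∑ v ∈ insert i S, G.degree v = G.degree i + ∑ v ∈ S, G.degree v :=
    Finset.sum_insert h1
  have hcard : (insert i S).card = G.degree i + 1 := by
    rw [Finset.card_insert_of_notMem h1]; rfl
  have h2 : (univ \ insert i S).card ≤ ∑ v ∈ univ \ insert i S, G.degree v := by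
    rw [Finset.card_eq_sum_ones]
    exact Finset.sum_le_sum fun v _ => hmin v
  have h3 : (univ \ insert i S).card = N - (G.degree i + 1) := by
    rw [Finset.card_sdiff_of_subset (subset_univ _), hcard, Finset.card_univ, Fintype.card_fin]
  have h4 : G.degree i + 1 ≤ N := by
    have := Finset.card_le_univ (insert i S)
    simpa [hcard] using this
  omega

instance (n s : ℕ) : DecidableRel (extremalGraph n s).Adj :=
  fun v w => inferInstanceAs (Decidable (v ≠ w ∧ ((v : ℕ) < s ∨ (w : ℕ) < s ∨
    ((v : ℕ) < n - 2 * s / 3 - 1 ∧ (w : ℕ) < n - 2 * s / 3 - 1))))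

lemma card_filter_lt (n a : ℕ) (h : a ≤ n) :
    (univ.filter fun w : Fin n => (w : ℕ) < a).card = a := by
  have : (univ.filter fun w : Fin n => (w : ℕ) < a)
      = (range a).attachFin (fun m hm => lt_of_lt_of_le (mem_range.1 hm) h) := by
    ext w; simp [Finset.mem_attachFin]
  rw [this, Finset.card_attachFin, card_range]

lemma deg_pos (n s : ℕ) (hn : 2 ≤ n) (hs : 1 ≤ s) (v : Fin n) :
    0 < (extremalGraph n s).degree v := by
  rw [degree_pos_iff_exists_adj]
  by_cases hv : (v : ℕ) = 0
  · exact ⟨⟨1, by omega⟩, Fin.ne_of_val_ne (by simp [hv]), Or.inl (by omega)⟩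
  · exact ⟨⟨0, by omega⟩, Fin.ne_of_val_ne hv, Or.inr (Or.inl hs)⟩

lemma deg_le_B (n s : ℕ) (hsa : s ≤ n - 2*s/3 - 1) (v : Fin n) :
    (extremalGraph n s).degree v ≤
      if (v : ℕ) < s then n - 1
      else if (v : ℕ) < n - 2*s/3 - 1 then n - 2*s/3 - 1 - 1 else s := by
  set a := n - 2*s/3 - 1 with ha
  have han : a ≤ n := by omega
  split_ifs with h1 h2
  · have := (extremalGraph n s).degree_lt_card_verts v
    simp only [Fintype.card_fin] at this; omega
  · rw [SimpleGraph.degree]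
    have hsub : (extremalGraph n s).neighborFinset v
        ⊆ (univ.filter fun w : Fin n => (w : ℕ) < a).erase v := by
      intro w hw
      rw [mem_neighborFinset] at hw
      obtain ⟨hne, hc⟩ := hw
      rw [Finset.mem_erase, Finset.mem_filter]
      exact ⟨fun hh => hne (hh ▸ rfl), mem_univ _, by omega⟩
    refine le_trans (Finset.card_le_card hsub) ?_
    rw [Finset.card_erase_of_mem (by rw [Finset.mem_filter]; exact ⟨mem_univ _, h2⟩),
      card_filter_lt n a han]
  · rw [SimpleGraph.degree]
    have hsub : (extremalGraph n s).neighborFinset v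
        ⊆ univ.filter fun w : Fin n => (w : ℕ) < s := by
      intro w hw
      rw [mem_neighborFinset] at hw
      obtain ⟨hne, hc⟩ := hw
      rw [Finset.mem_filter]
      exact ⟨mem_univ _, by omega⟩
    refine le_trans (Finset.card_le_card hsub) ?_
    rw [card_filter_lt n s (by omega)]

lemma sum_deg_le (n s : ℕ) (hsa : s ≤ n - 2*s/3 - 1) :
    ∑ v : Fin n, (extremalGraph n s).degree v ≤
      s * (n-1) + ((n - 2*s/3 - 1) - s) * ((n - 2*s/3 - 1) - 1) + (n - (n - 2*s/3 - 1)) * s := by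
  set a := n - 2*s/3 - 1 with ha
  have han : a ≤ n := by omega
  calc ∑ v : Fin n, (extremalGraph n s).degree v
      ≤ ∑ v : Fin n, (if (v : ℕ) < s then n - 1 else if (v : ℕ) < a then a - 1 else s) :=
        Finset.sum_le_sum fun v _ => deg_le_B n s hsa v
    _ = ∑ x ∈ range n, (if x < s then n - 1 else if x < a then a - 1 else s) :=
        Fin.sum_univ_eq_sum_range (fun x => if x < s then n - 1 else if x < a then a - 1 else s) n
    _ = s * (n-1) + (a - s) * (a - 1) + (n - a) * s := by
        rw [Finset.range_eq_Ico, ← Finset.sum_Ico_consecutive _ (Nat.zero_le a) han,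
          ← Finset.sum_Ico_consecutive _ (Nat.zero_le s) (by omega : s ≤ a)]
        have e1 : ∑ x ∈ Finset.Ico 0 s, (if x < s then n - 1 else if x < a then a - 1 else s)
            = s * (n - 1) := by
          have h : ∀ x ∈ Finset.Ico 0 s,
              (if x < s then n - 1 else if x < a then a - 1 else s) = n - 1 := fun x hx => by
            rw [Finset.mem_Ico] at hx; rw [if_pos (by omega)]
          rw [Finset.sum_congr rfl h, Finset.sum_const, Nat.card_Ico, smul_eq_mul, Nat.sub_zero]
        have e2 : ∑ x ∈ Finset.Ico s a, (if x < s then n - 1 else if x < a then a - 1 else s)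
            = (a - s) * (a - 1) := by
          have h : ∀ x ∈ Finset.Ico s a,
              (if x < s then n - 1 else if x < a then a - 1 else s) = a - 1 := fun x hx => by
            rw [Finset.mem_Ico] at hx; rw [if_neg (by omega), if_pos (by omega)]
          rw [Finset.sum_congr rfl h, Finset.sum_const, Nat.card_Ico, smul_eq_mul]
        have e3 : ∑ x ∈ Finset.Ico a n, (if x < s then n - 1 else if x < a then a - 1 else s)
            = (n - a) * s := by
          have h : ∀ x ∈ Finset.Ico a n,
              (if x < s then n - 1 else if x < a then a - 1 else s) = s := fun x hx => by
            rw [Finset.mem_Ico] at hx; rw [if_neg (by omega), if_neg (by omega)]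
          rw [Finset.sum_congr rfl h, Finset.sum_const, Nat.card_Ico, smul_eq_mul]
        rw [e1, e2, e3]

set_option maxHeartbeats 1000000 in
lemma arith (n k d t : ℝ) (hk : 0 ≤ k) (ht : 0 ≤ t) (hd : 1 ≤ d)
    (h1 : 5*k + 4 ≤ n) (h2 : t ≤ 2*k) (h3 : 6*d^2 + 22*d + 31 ≤ 6*n)
    (h4 : 20*d + 56 ≤ 3*n) (h5 : 3*t + 1 ≤ 2*d) :
    (3*k+2)*(n-1) + (n-5*k-4)*(n-2*k-3) + (2*k+2)*(3*k+2) + 1 - n < (n - t - 2)^2 := by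
  nlinarith [mul_nonneg (sub_nonneg.2 h1) (sub_nonneg.2 h2), mul_nonneg (sub_nonneg.2 h3) (sub_nonneg.2 h4),
    mul_nonneg (sub_nonneg.2 h1) (sub_nonneg.2 h5), mul_nonneg (sub_nonneg.2 h2) (sub_nonneg.2 h5),
    sq_nonneg (2*k - t), sq_nonneg (3*t + 1 - 2*d)]

end Aux

set_option maxHeartbeats 2000000 in
theorem stmt18 (n s δ : ℕ) (hn1 : 1 ≤ n) (hs1 : 1 ≤ s) (hδ1 : 1 ≤ δ)
    (hδ3 : ¬ (3 ∣ δ)) (hs : s % 3 = 2) (hsδ : δ + 1 ≤ s) (hsn : 5 * s + 2 ≤ 3 * n)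
    (hn : max ((6 * (δ : ℚ) ^ 2 + 22 * δ + 31) / 6) ((20 * (δ : ℚ) + 56) / 3) ≤ (n : ℚ)) :
    specRad (extremalGraph n s) < (n : ℝ) - (2 * δ / 3 : ℕ) - 2 := by
  -- numeric preliminaries
  set k := s / 3 with hk
  have hsk : s = 3 * k + 2 := by omega
  set t := 2 * δ / 3 with htdef
  have hδm : δ % 3 = 1 ∨ δ % 3 = 2 := by omega
  have ht5 : 3 * t + 1 ≤ 2 * δ := by omega
  have hq1 : (6 * (δ : ℚ) ^ 2 + 22 * δ + 31) ≤ 6 * n := by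
    have := le_trans (le_max_left _ _) hn; linarith
  have hq2 : (20 * (δ : ℚ) + 56) ≤ 3 * n := by
    have := le_trans (le_max_right _ _) hn; linarith
  have hn1' : 6 * δ ^ 2 + 22 * δ + 31 ≤ 6 * n := by exact_mod_cast hq1
  have hn2' : 20 * δ + 56 ≤ 3 * n := by exact_mod_cast hq2
  have hn5 : 5 * k + 4 ≤ n := by omega
  have htk : t ≤ 2 * k := by omega
  have hsa : s ≤ n - 2 * s / 3 - 1 := by omega
  have hn2 : 2 ≤ n := by omega
  set a := n - 2 * s / 3 - 1 with hadef
  -- the degree-sum bound, as a natural number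
  set T := s * (n - 1) + (a - s) * (a - 1) + (n - a) * s with hT
  set M : ℝ := (T : ℝ) + 1 - n with hM
  have hBpos : (0 : ℝ) < (n : ℝ) - t - 2 := by
    have : t + 3 ≤ n := by omega
    have := (Nat.cast_le (α := ℝ)).mpr this
    push_cast at this ⊢
    linarith
  have main : ∀ A : Matrix (Fin n) (Fin n) ℝ,
      (∀ i j, A i j = if (extremalGraph n s).Adj i j then 1 else 0) →
      sSup (spectrum ℝ A) < (n : ℝ) - t - 2 := by
    intro A hA
    have hA0 : ∀ i j, 0 ≤ A i j := fun i j => by rw [hA]; split <;> norm_num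
    have hMrow : ∀ i, ∑ j, (A * A) i j ≤ M := by
      intro i
      rw [rowsum_AA (extremalGraph n s) A hA i]
      have h1 := hong (extremalGraph n s) (deg_pos n s hn2 hs1) i
      have h2 := sum_deg_le n s hsa
      rw [← hadef] at h2
      have hnat : (∑ kk ∈ (extremalGraph n s).neighborFinset i,
          (extremalGraph n s).degree kk) + n ≤ T + 1 := by omega
      have := (Nat.cast_le (α := ℝ)).mpr hnat
      rw [hM]
      push_cast at this ⊢
      linarith
    have hMB : M < ((n : ℝ) - t - 2) ^ 2 := by
      have e1 : a - s = n - (5 * k + 4) := by omega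
      have e2 : a - 1 = n - (2 * k + 3) := by omega
      have e3 : n - a = 2 * k + 2 := by omega
      rw [hM, hT, e1, e2, e3, hsk]
      have c1 : ((n - (5 * k + 4) : ℕ) : ℝ) = (n : ℝ) - 5 * k - 4 := by
        rw [Nat.cast_sub (by omega)]; push_cast; ring
      have c2 : ((n - (2 * k + 3) : ℕ) : ℝ) = (n : ℝ) - 2 * k - 3 := by
        rw [Nat.cast_sub (by omega)]; push_cast; ring
      have c3 : ((n - 1 : ℕ) : ℝ) = (n : ℝ) - 1 := by
        rw [Nat.cast_sub (by omega)]; push_cast; ring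
      push_cast [c1, c2, c3]
      have harith := arith (n : ℝ) (k : ℝ) (δ : ℝ) (t : ℝ)
        (by positivity) (by positivity) (by exact_mod_cast hδ1)
        (by exact_mod_cast hn5) (by exact_mod_cast htk)
        (by exact_mod_cast hn1') (by exact_mod_cast hn2')
        (by exact_mod_cast ht5)
      linarith
    refine lt_of_le_of_lt (Real.sSup_le (fun μ hμ => ?_) (Real.sqrt_nonneg M)) ?_
    · have hμ2 := eig_sq_le A hA0 M hMrow μ hμ
      calc μ ≤ |μ| := le_abs_self _
        _ = Real.sqrt (μ ^ 2) := (Real.sqrt_sq_eq_abs μ).symm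
        _ ≤ Real.sqrt M := Real.sqrt_le_sqrt hμ2
    · rw [Real.sqrt_lt' hBpos]
      exact hMB
  unfold specRad
  rw [Subsingleton.elim (Fintype.ofFinite (Fin n)) (Fin.fintype n),
    Subsingleton.elim (Classical.decEq (Fin n)) (instDecidableEqFin n)]
  refine main _ (fun i j => ?_)
  have e : (Classical.decRel (extremalGraph n s).Adj)
      = (inferInstance : DecidableRel (extremalGraph n s).Adj) := Subsingleton.elim _ _
  rw [SimpleGraph.adjMatrix_apply, e]
end
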